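/- The number of monic irreducible degree-three polynomials over F_q with constant term -1 equals (q^2 + q + 1 - gcd(3, q-1))/3. -/

import Mathlib

/-!
Parametrise the cubics as `X³ + aX² + bX - 1` with `(a, b) ∈ F²`. Such a cubic is irreducible
iff it has no root in `F`; its roots are nonzero, and if `k ≤ 3` is their number then
`6·[k = 0] = 6 - 6k + 3k(k - 1) - k(k - 1)(k - 2)`. Sum this over `(a, b)` and swap the sums:
every `r ≠ 0` is a root of `q` of the cubics, and every ordered pair `r ≠ s` of nonzero
elements is a pair of roots of exactly one of them, `(X - r)(X - s)(X - (rs)⁻¹)`, whose third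
root is new unless `(rs)⁻¹ ∈ {r, s}`. That happens for `2(q - 1 - gcd(3, q - 1))` pairs,
`gcd(3, q - 1)` being the number of cube roots of unity in the cyclic group `Fˣ`.
-/

open Polynomial Finset

theorem card_filter_pow_eq_one (F : Type*) [Field F] [Fintype F] [DecidableEq F] (n : ℕ)
    [NeZero n] : #{x : F | x ^ n = 1} = n.gcd (Fintype.card F - 1) := by
  have hroots : ({x : F | x ^ n = 1} : Finset F) = (nthRoots n (1 : F)).toFinset := by
    ext x; simp [mem_nthRoots (NeZero.pos n)]
  rw [hroots, ← Nat.card_eq_finsetCard,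
    Nat.card_congr (Equiv.subtypeEquivRight fun _ => Multiset.mem_toFinset),
    ← Nat.card_congr (rootsOfUnityEquivNthRoots F n),
    rootsOfUnity_eq_ker, IsCyclic.card_powMonoidHom_ker, Nat.card_eq_fintype_card,
    Fintype.card_units, Nat.gcd_comm]

theorem sum_sum_mem_comm {ι α β : Type*} [Fintype ι] [Fintype α] [AddCommMonoid β]
    [DecidableEq α] (t : ι → Finset α) (f : ι → α → β) :
    ∑ i, ∑ x ∈ t i, f i x = ∑ x, ∑ i with x ∈ t i, f i x :=
  sum_comm' (by simp)

theorem card_erase_erase_insert_insert {α : Type*} [DecidableEq α] {r s : α} (t : α) :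
    #((({r, s, t} : Finset α).erase r).erase s) = if t ≠ r ∧ t ≠ s then 1 else 0 := by
  have h : (({r, s, t} : Finset α).erase r).erase s =
      if t ≠ r ∧ t ≠ s then {t} else ∅ := by
    ext x
    split_ifs <;> aesop
  rw [h, apply_ite card, card_singleton, card_empty]

-- `k(k - 1)(k - 2)` for `k = #R` appears as a sum over the ordered pairs of distinct elements.
theorem six_mul_ite_eq_empty_add_of_card_le_three {α : Type*} [DecidableEq α] {R : Finset α}
    (h : #R ≤ 3) :
    6 * (if R = ∅ then 1 else 0) + 6 * #R + ∑ p ∈ R.offDiag, #((R.erase p.1).erase p.2) =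
      6 + 3 * #R.offDiag := by
  have hsum : ∑ p ∈ R.offDiag, #((R.erase p.1).erase p.2) = #R.offDiag * (#R - 2) := by
    rw [← smul_eq_mul, ← sum_const]
    refine sum_congr rfl fun p hp => ?_
    obtain ⟨h1, h2, hne⟩ := mem_offDiag.mp hp
    rw [card_erase_of_mem (mem_erase.mpr ⟨hne.symm, h2⟩), card_erase_of_mem h1]; rfl
  simp_rw [hsum, offDiag_card, ← card_eq_zero]
  interval_cases #R <;> rfl

section Cubic

variable {F : Type*} [Field F]

noncomputable def cubicNegOne (a b : F) : F[X] := X ^ 3 + C a * X ^ 2 + C b * X - 1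

theorem monic_cubicNegOne (a b : F) : (cubicNegOne a b).Monic := by
  unfold cubicNegOne; monicity!

theorem natDegree_cubicNegOne (a b : F) : (cubicNegOne a b).natDegree = 3 := by
  unfold cubicNegOne; compute_degree!

@[simp]
theorem coeff_cubicNegOne_zero (a b : F) : (cubicNegOne a b).coeff 0 = -1 := by
  simp [cubicNegOne, coeff_one]

@[simp]
theorem coeff_cubicNegOne_one (a b : F) : (cubicNegOne a b).coeff 1 = b := by
  simp [cubicNegOne, coeff_one]

@[simp]
theorem coeff_cubicNegOne_two (a b : F) : (cubicNegOne a b).coeff 2 = a := by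
  simp [cubicNegOne, coeff_one]

theorem eq_cubicNegOne_of_monic {p : F[X]} (hm : p.Monic) (hd : p.natDegree = 3)
    (h0 : p.coeff 0 = -1) : p = cubicNegOne (p.coeff 2) (p.coeff 1) := by
  have h3 : p.coeff 3 = 1 := hd ▸ hm.leadingCoeff
  conv_lhs => rw [p.as_sum_range' 4 (by omega)]
  simp only [sum_range_succ, ← C_mul_X_pow_eq_monomial, h3, h0, cubicNegOne, map_one, map_neg]
  ring

noncomputable def irreducibleCubicNegOneEquiv :
    {p : F[X] // p.Monic ∧ p.natDegree = 3 ∧ p.coeff 0 = -1 ∧ Irreducible p} ≃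
      {ab : F × F // Irreducible (cubicNegOne ab.1 ab.2)} where
  toFun p := ⟨(p.1.coeff 2, p.1.coeff 1), by
    rw [← eq_cubicNegOne_of_monic p.2.1 p.2.2.1 p.2.2.2.1]; exact p.2.2.2.2⟩
  invFun ab := ⟨cubicNegOne ab.1.1 ab.1.2, monic_cubicNegOne _ _, natDegree_cubicNegOne _ _,
    coeff_cubicNegOne_zero _ _, ab.2⟩
  left_inv p := Subtype.ext (eq_cubicNegOne_of_monic p.2.1 p.2.2.1 p.2.2.2.1).symm
  right_inv ab := Subtype.ext (by simp)

theorem inv_mul_eq_left_iff {r s : F} (hr : r ≠ 0) : (r * s)⁻¹ = r ↔ s = (r ^ 2)⁻¹ := by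
  rw [inv_eq_iff_eq_inv, mul_comm, ← eq_div_iff hr, div_eq_mul_inv, ← mul_inv, ← sq]

def coeffsOfRoots (r s : F) : F × F := (-(r + s + (r * s)⁻¹), r * s + r⁻¹ + s⁻¹)

theorem cubicNegOne_coeffsOfRoots {r s : F} (hr : r ≠ 0) (hs : s ≠ 0) :
    cubicNegOne (coeffsOfRoots r s).1 (coeffsOfRoots r s).2 =
      (X - C r) * (X - C s) * (X - C (r * s)⁻¹) := by
  have hrs : r * s * (r * s)⁻¹ = 1 := mul_inv_cancel₀ (mul_ne_zero hr hs)
  have hr' : r⁻¹ = s * (r * s)⁻¹ := by field_simp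
  have hs' : s⁻¹ = r * (r * s)⁻¹ := by field_simp
  rw [cubicNegOne, coeffsOfRoots, hr', hs', ← C_1, ← hrs]
  simp only [map_add, map_mul, map_neg]
  ring

variable [DecidableEq F]

noncomputable def cubicNegOneRoots (a b : F) : Finset F := (cubicNegOne a b).roots.toFinset

theorem mem_cubicNegOneRoots {a b r : F} :
    r ∈ cubicNegOneRoots a b ↔ r ^ 3 + a * r ^ 2 + b * r = 1 := by
  rw [cubicNegOneRoots, Multiset.mem_toFinset, mem_roots (monic_cubicNegOne a b).ne_zero]
  simp [cubicNegOne, sub_eq_zero]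

theorem card_cubicNegOneRoots_le (a b : F) : #(cubicNegOneRoots a b) ≤ 3 :=
  (Multiset.toFinset_card_le _).trans ((card_roots' _).trans (natDegree_cubicNegOne a b).le)

theorem irreducible_cubicNegOne_iff (a b : F) :
    Irreducible (cubicNegOne a b) ↔ cubicNegOneRoots a b = ∅ := by
  rw [(monic_cubicNegOne a b).irreducible_iff_roots_eq_zero_of_degree_le_three
    (by simp [natDegree_cubicNegOne]) (by simp [natDegree_cubicNegOne]), cubicNegOneRoots,
    Multiset.toFinset_eq_empty]

theorem ne_zero_of_mem_cubicNegOneRoots {a b r : F} (h : r ∈ cubicNegOneRoots a b) : r ≠ 0 := by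
  rintro rfl
  simp [mem_cubicNegOneRoots] at h

theorem cubicNegOneRoots_coeffsOfRoots {r s : F} (hr : r ≠ 0) (hs : s ≠ 0) :
    cubicNegOneRoots (coeffsOfRoots r s).1 (coeffsOfRoots r s).2 = {r, s, (r * s)⁻¹} := by
  have hrs := mul_ne_zero (X_sub_C_ne_zero r) (X_sub_C_ne_zero s)
  rw [cubicNegOneRoots, cubicNegOne_coeffsOfRoots hr hs,
    roots_mul (mul_ne_zero hrs (X_sub_C_ne_zero _)), roots_mul hrs, roots_X_sub_C, roots_X_sub_C,
    roots_X_sub_C]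
  ext x
  simp

theorem eq_coeffsOfRoots {a b r s : F} (hrs : r ≠ s) (hr : r ∈ cubicNegOneRoots a b)
    (hs : s ∈ cubicNegOneRoots a b) : (a, b) = coeffsOfRoots r s := by
  have hr0 := ne_zero_of_mem_cubicNegOneRoots hr
  have hs0 := ne_zero_of_mem_cubicNegOneRoots hs
  rw [mem_cubicNegOneRoots] at hr hs
  have hd : r * s * (r - s) ≠ 0 := mul_ne_zero (mul_ne_zero hr0 hs0) (sub_ne_zero.mpr hrs)
  rw [coeffsOfRoots, Prod.mk.injEq]
  constructor
  · apply mul_right_cancel₀ hd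
    rw [show a * (r * s * (r - s)) = (s - r) * (1 + r * s * (r + s)) by
      linear_combination s * hr - r * hs]
    field_simp
    ring
  · apply mul_right_cancel₀ hd
    rw [show b * (r * s * (r - s)) = (r - s) * (r + s + r ^ 2 * s ^ 2) by
      linear_combination r ^ 2 * hs - s ^ 2 * hr]
    field_simp
    ring

end Cubic

section Counting

variable {F : Type*} [Field F] [Fintype F] [DecidableEq F]

theorem card_filter_mem_cubicNegOneRoots (r : F) :
    #{ab : F × F | r ∈ cubicNegOneRoots ab.1 ab.2} = if r = 0 then 0 else Fintype.card F := by
  split_ifs with hr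
  · rw [card_eq_zero, filter_eq_empty_iff]
    exact fun ab _ h => ne_zero_of_mem_cubicNegOneRoots h hr
  · have hline : ({ab : F × F | r ∈ cubicNegOneRoots ab.1 ab.2} : Finset _) =
        univ.image fun a => (a, (1 - r ^ 3 - a * r ^ 2) / r) := by
      ext ⟨a, b⟩
      simp only [mem_filter, mem_univ, true_and, mem_cubicNegOneRoots, mem_image, Prod.mk.injEq,
        exists_eq_left, div_eq_iff hr]
      constructor <;> intro h <;> linear_combination -h
    rw [hline, card_image_of_injective _ fun a a' h => (Prod.ext_iff.mp h).1, card_univ]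

theorem filter_mem_offDiag_cubicNegOneRoots (p : F × F) :
    ({ab : F × F | p ∈ (cubicNegOneRoots ab.1 ab.2).offDiag} : Finset _) =
      if p ∈ ({0}ᶜ : Finset F).offDiag then {coeffsOfRoots p.1 p.2} else ∅ := by
  split_ifs with hp
  · obtain ⟨hr, hs, hne⟩ := mem_offDiag.mp hp
    ext ab
    simp only [mem_filter, mem_univ, true_and, mem_offDiag, mem_singleton]
    refine ⟨fun ⟨hr, hs, hne⟩ => eq_coeffsOfRoots hne hr hs, ?_⟩
    rintro rfl
    simp_all [cubicNegOneRoots_coeffsOfRoots]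
  · rw [filter_eq_empty_iff]
    intro ab _ hab
    obtain ⟨hr, hs, hne⟩ := mem_offDiag.mp hab
    simp_all [ne_zero_of_mem_cubicNegOneRoots hr, ne_zero_of_mem_cubicNegOneRoots hs]

theorem sum_card_cubicNegOneRoots :
    ∑ ab : F × F, #(cubicNegOneRoots ab.1 ab.2) = (Fintype.card F - 1) * Fintype.card F := by
  simp_rw [card_eq_sum_ones]
  rw [sum_sum_mem_comm]
  simp_rw [← card_eq_sum_ones, card_filter_mem_cubicNegOneRoots]
  rw [sum_ite, sum_const_zero, sum_const, filter_ne', card_erase_of_mem (mem_univ _), card_univ,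
    zero_add, smul_eq_mul]

theorem sum_card_offDiag_cubicNegOneRoots :
    ∑ ab : F × F, #(cubicNegOneRoots ab.1 ab.2).offDiag = #({0}ᶜ : Finset F).offDiag := by
  simp_rw [card_eq_sum_ones]
  rw [sum_sum_mem_comm]
  simp_rw [← card_eq_sum_ones, filter_mem_offDiag_cubicNegOneRoots, apply_ite card,
    card_singleton, card_empty]
  rw [sum_boole, filter_mem_eq_inter, univ_inter, Nat.cast_id]

theorem sum_card_erase_erase_cubicNegOneRoots :
    ∑ ab : F × F, ∑ p ∈ (cubicNegOneRoots ab.1 ab.2).offDiag,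
        #(((cubicNegOneRoots ab.1 ab.2).erase p.1).erase p.2) =
      #{p ∈ ({0}ᶜ : Finset F).offDiag | (p.1 * p.2)⁻¹ ≠ p.1 ∧ (p.1 * p.2)⁻¹ ≠ p.2} := by
  rw [sum_sum_mem_comm, card_filter, ← sum_subset (subset_univ _) fun p _ hp => by
    rw [filter_mem_offDiag_cubicNegOneRoots, if_neg hp, sum_empty]]
  refine sum_congr rfl fun p hp => ?_
  obtain ⟨hr, hs, -⟩ := mem_offDiag.mp hp
  rw [filter_mem_offDiag_cubicNegOneRoots, if_pos hp, sum_singleton,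
    cubicNegOneRoots_coeffsOfRoots (by simpa using hr) (by simpa using hs),
    card_erase_erase_insert_insert]

theorem card_filter_offDiag_inv_mul_eq_fst_add_gcd :
    #{p ∈ ({0}ᶜ : Finset F).offDiag | (p.1 * p.2)⁻¹ = p.1} + Nat.gcd 3 (Fintype.card F - 1) =
      Fintype.card F - 1 := by
  have hbij : #{p ∈ ({0}ᶜ : Finset F).offDiag | (p.1 * p.2)⁻¹ = p.1} =
      #{r ∈ ({0}ᶜ : Finset F) | r ^ 3 ≠ 1} := by
    refine card_nbij' Prod.fst (fun r => (r, (r ^ 2)⁻¹)) ?_ ?_ ?_ ?_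
    · rintro ⟨r, s⟩ hp
      simp only [coe_filter, mem_offDiag, mem_compl, mem_singleton, Set.mem_ofPred_eq] at hp ⊢
      obtain ⟨⟨hr, hs, hrs⟩, h⟩ := hp
      refine ⟨hr, fun h3 => hrs ?_⟩
      rw [(inv_mul_eq_left_iff hr).mp h]
      exact eq_inv_of_mul_eq_one_left (by rw [← pow_succ']; exact h3)
    · intro r hr
      simp only [coe_filter, mem_offDiag, mem_compl, mem_singleton, Set.mem_ofPred_eq] at hr ⊢
      refine ⟨⟨hr.1, by simpa using hr.1, fun h => hr.2 ?_⟩,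
        (inv_mul_eq_left_iff hr.1).mpr rfl⟩
      rw [pow_succ']
      nth_rw 1 [h]
      exact inv_mul_cancel₀ (pow_ne_zero 2 hr.1)
    · rintro ⟨r, s⟩ hp
      simp only [coe_filter, mem_offDiag, mem_compl, mem_singleton, Set.mem_ofPred_eq] at hp
      simp [← (inv_mul_eq_left_iff hp.1.1).mp hp.2]
    · intro r _
      rfl
  have hcube : ({r ∈ ({0}ᶜ : Finset F) | r ^ 3 = 1} : Finset F) =
      ({r : F | r ^ 3 = 1} : Finset F) := by
    ext r
    simp only [mem_filter, mem_compl, mem_singleton, mem_univ, true_and, and_iff_right_iff_imp]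
    rintro h rfl
    simp at h
  rw [hbij, ← card_filter_pow_eq_one F 3, ← hcube, add_comm, card_filter_add_card_filter_not,
    card_compl, card_singleton]

theorem card_filter_offDiag_inv_mul_ne_add :
    #{p ∈ ({0}ᶜ : Finset F).offDiag | (p.1 * p.2)⁻¹ ≠ p.1 ∧ (p.1 * p.2)⁻¹ ≠ p.2} +
        2 * (Fintype.card F - 1) =
      #({0}ᶜ : Finset F).offDiag + 2 * Nat.gcd 3 (Fintype.card F - 1) := by
  have hfst := card_filter_offDiag_inv_mul_eq_fst_add_gcd (F := F)
  set O := ({0}ᶜ : Finset F).offDiag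
  have hdisj : Disjoint {p ∈ O | (p.1 * p.2)⁻¹ = p.1} {p ∈ O | (p.1 * p.2)⁻¹ = p.2} := by
    exact disjoint_filter.mpr fun p hp h1 h2 => (mem_offDiag.mp hp).2.2 (h1.symm.trans h2)
  have hsplit := card_filter_add_card_filter_not (s := O)
    fun p => (p.1 * p.2)⁻¹ ≠ p.1 ∧ (p.1 * p.2)⁻¹ ≠ p.2
  simp only [not_and_or, not_not, filter_or, card_union_of_disjoint hdisj] at hsplit
  have hswap : #{p ∈ O | (p.1 * p.2)⁻¹ = p.2} = #{p ∈ O | (p.1 * p.2)⁻¹ = p.1} := by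
    refine card_nbij' Prod.swap Prod.swap ?_ ?_ (fun _ _ => rfl) (fun _ _ => rfl) <;>
    · rintro ⟨r, s⟩ hp
      simp only [O, coe_filter, mem_offDiag, Set.mem_ofPred_eq, Prod.swap_prod_mk] at hp ⊢
      obtain ⟨⟨hr, hs, hrs⟩, h⟩ := hp
      exact ⟨⟨hs, hr, hrs.symm⟩, by rwa [mul_comm]⟩
  omega

theorem three_mul_card_filter_cubicNegOneRoots_eq_empty_add_gcd :
    3 * #{ab : F × F | cubicNegOneRoots ab.1 ab.2 = ∅} + Nat.gcd 3 (Fintype.card F - 1) =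
      Fintype.card F ^ 2 + Fintype.card F + 1 := by
  have hsum := Fintype.sum_congr _ _ fun ab : F × F =>
    six_mul_ite_eq_empty_add_of_card_le_three (card_cubicNegOneRoots_le ab.1 ab.2)
  simp only [sum_add_distrib, ← mul_sum, sum_boole, Nat.cast_id, sum_card_cubicNegOneRoots,
    sum_card_offDiag_cubicNegOneRoots, sum_card_erase_erase_cubicNegOneRoots, sum_const,
    card_univ, Fintype.card_prod, smul_eq_mul] at hsum
  have hthird := card_filter_offDiag_inv_mul_ne_add (F := F)
  have hO : #({0}ᶜ : Finset F).offDiag + (Fintype.card F - 1) =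
      (Fintype.card F - 1) * (Fintype.card F - 1) := by
    rw [offDiag_card, card_compl, card_singleton]
    exact Nat.sub_add_cancel (Nat.le_mul_self _)
  obtain ⟨m, hm⟩ : ∃ m, Fintype.card F = m + 1 :=
    ⟨_, (Nat.succ_pred_eq_of_pos Fintype.card_pos).symm⟩
  rw [hm, Nat.add_sub_cancel] at hsum hthird hO ⊢
  linarith

end Counting

theorem count_irreducible_cubics (F : Type*) [Field F] [Fintype F] :
    Nat.card {p : Polynomial F // p.Monic ∧ p.natDegree = 3 ∧ p.coeff 0 = -1 ∧
        Irreducible p} =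
      (Fintype.card F ^ 2 + Fintype.card F + 1 - Nat.gcd 3 (Fintype.card F - 1)) / 3 := by
  classical
  rw [Nat.card_congr irreducibleCubicNegOneEquiv, Nat.card_eq_fintype_card, Fintype.card_subtype]
  simp_rw [irreducible_cubicNegOne_iff]
  have := three_mul_card_filter_cubicNegOneRoots_eq_empty_add_gcd (F := F)
  omega
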